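/- Let H : X → (Y1 × X) → ℝ and K : X → (Y2 × X) → ℝ be HMMs and g : W → (X × X) → ℝ a gain function. For an HMM J : X → (Y × X) → ℝ and gain function f : V → (X × X) → ℝ define f^J : (Y → V) → (X × X) → ℝ by f^J σ (x,x') = Σ_{y,u} f (σ y) (x,u) * J x' (y,u). Then the gain-function transformer respects sequential composition: for every strategy σ : Y1 → Y2 → W and all x, x' ∈ X, (g^K)^H σ (x,x') = g^{H;K} σ̃ (x,x'), where σ̃ : Y1 × Y2 → W is the uncurried strategy σ̃ (y1,y2) = σ y1 y2 and g^{H;K} is the transformer applied to the HMM H;K with observation space Y1 × Y2. -/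
import Mathlib

open Finset

/-- Sequential composition of HMMs. -/
noncomputable def seqComp {X Y1 Y2 : Type} [Fintype X]
    (H1 : X → Y1 × X → ℝ) (H2 : X → Y2 × X → ℝ) : X → (Y1 × Y2) × X → ℝ :=
  fun x p => ∑ x'', H1 x (p.1.1, x'') * H2 x'' (p.1.2, p.2)

/-- The transformed gain function `f^J` on strategies:
`f^J σ (x,x') = Σ_{y,u} f (σ y) (x,u) * J x' (y,u)`. -/
noncomputable def gtrans {X Y V : Type} [Fintype X] [Fintype Y]
    (J : X → Y × X → ℝ) (f : V → X × X → ℝ) : (Y → V) → X × X → ℝ :=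
  fun σ p => ∑ y, ∑ u, f (σ y) (p.1, u) * J p.2 (y, u)

/-- the gain-function transformer respects sequential composition:
`(g^K)^H σ = g^{H;K} σ̃` where `σ̃` uncurries `σ`. -/
theorem gtrans_seqComp {X Y1 Y2 W : Type}
    [Fintype X] [Nonempty X] [Fintype Y1] [Nonempty Y1] [Fintype Y2] [Nonempty Y2]
    [Fintype W] [Nonempty W]
    (H : X → Y1 × X → ℝ) (K : X → Y2 × X → ℝ)
    (hHpos : ∀ x p, 0 ≤ H x p) (hHsum : ∀ x, ∑ p : Y1 × X, H x p = 1)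
    (hKpos : ∀ x p, 0 ≤ K x p) (hKsum : ∀ x, ∑ p : Y2 × X, K x p = 1)
    (g : W → X × X → ℝ) :
    ∀ (σ : Y1 → Y2 → W) (x x' : X),
      gtrans H (gtrans K g) σ (x, x') =
        gtrans (seqComp H K) g (fun p : Y1 × Y2 => σ p.1 p.2) (x, x') := by
  intro σ x x'
  simp only [gtrans, seqComp, Fintype.sum_prod_type]
  refine Finset.sum_congr rfl fun y1 _ => ?_
  simp only [Finset.sum_mul, Finset.mul_sum]
  rw [Finset.sum_comm]
  refine Finset.sum_congr rfl fun y2 _ => ?_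
  rw [Finset.sum_comm]
  exact Finset.sum_congr rfl fun u _ => Finset.sum_congr rfl fun x2 _ => by ring
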